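/- arXiv:2111.04035 — 2 statements merged into one kernel-verified Lean document; each statement's English description precedes it below -/
import Mathlib

section
/- If D is a Δ-matroid on E with upper matroid M_u and lower matroid M_l, then every basis of M_u is a spanning set of M_l and every basis of M_l is independent in M_u. -/
open Set
open scoped symmDiff

/-- The symmetric exchange axiom for a collection of subsets. -/
def SymExch {α : Type*} (𝓕 : Set (Set α)) : Prop :=
  ∀ ⦃F₁⦄, F₁ ∈ 𝓕 → ∀ ⦃F₂⦄, F₂ ∈ 𝓕 →
    ∀ x ∈ F₁ ∆ F₂, ∃ y ∈ F₁ ∆ F₂, F₁ ∆ ({x, y} : Set α) ∈ 𝓕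

/-- A Δ-matroid on a finite ground set. -/
structure DeltaMatroid (α : Type*) where
  E : Set α
  Feasible : Set (Set α)
  ground_finite : E.Finite
  subset_ground : ∀ F ∈ Feasible, F ⊆ E
  feasible_nonempty : Feasible.Nonempty
  exchange : SymExch Feasible

/-- A lower base: a feasible set of minimum cardinality. -/
def DeltaMatroid.LowerBase {α : Type*} (D : DeltaMatroid α) (B : Set α) : Prop :=
  B ∈ D.Feasible ∧ ∀ F ∈ D.Feasible, B.ncard ≤ F.ncard

/-- An upper base: a feasible set of maximum cardinality. -/
def DeltaMatroid.UpperBase {α : Type*} (D : DeltaMatroid α) (B : Set α) : Prop :=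
  B ∈ D.Feasible ∧ ∀ F ∈ D.Feasible, F.ncard ≤ B.ncard

/-- A circuit of a matroid: a minimal dependent set. -/
def Matroid.IsCircuitDef {α : Type*} (M : Matroid α) (C : Set α) : Prop :=
  C ⊆ M.E ∧ ¬ M.Indep C ∧ ∀ D, D ⊂ C → M.Indep D

/-- Every circuit of `Mu` is a union of circuits of `Ml`. -/
def CircuitsUnion {α : Type*} (Mu Ml : Matroid α) : Prop :=
  ∀ C, Mu.IsCircuitDef C → ∃ 𝒞 : Set (Set α), (∀ C' ∈ 𝒞, Ml.IsCircuitDef C') ∧ C = ⋃₀ 𝒞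

/-- `M` is the upper matroid of the Δ-matroid `D`. -/
def IsUpperMatroid {α : Type*} (D : DeltaMatroid α) (M : Matroid α) : Prop :=
  M.E = D.E ∧ ∀ B, M.IsBase B ↔ D.UpperBase B

/-- `M` is the lower matroid of the Δ-matroid `D`. -/
def IsLowerMatroid {α : Type*} (D : DeltaMatroid α) (M : Matroid α) : Prop :=
  M.E = D.E ∧ ∀ B, M.IsBase B ↔ D.LowerBase B

lemma DeltaMatroid.feasible_finite' {α : Type*} (D : DeltaMatroid α) : D.Feasible.Finite :=
  D.ground_finite.finite_subsets.subset (fun F hF => D.subset_ground F hF)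

lemma DeltaMatroid.mem_finite' {α : Type*} (D : DeltaMatroid α) {F : Set α}
    (hF : F ∈ D.Feasible) : F.Finite :=
  D.ground_finite.subset (D.subset_ground F hF)

/-- every upper base is spanning in the lower matroid, and every
lower base is independent in the upper matroid. -/
theorem upperBase_spanning_and_lowerBase_indep {α : Type*} (D : DeltaMatroid α) :
    (∀ B, D.UpperBase B → ∃ L, D.LowerBase L ∧ L ⊆ B) ∧
    (∀ B, D.LowerBase B → ∃ U, D.UpperBase U ∧ B ⊆ U) := by
  constructor
  · intro B hB
    obtain ⟨L0, hL0, hL0min⟩ := Set.exists_min_image D.Feasible Set.ncard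
      D.feasible_finite' D.feasible_nonempty
    obtain ⟨L, hL, hmin⟩ := Set.exists_min_image {L | D.LowerBase L} (fun L => (L \ B).ncard)
      (D.feasible_finite'.subset (fun L hL => hL.1)) ⟨L0, hL0, hL0min⟩
    refine ⟨L, hL, ?_⟩
    by_contra hnot
    obtain ⟨x, hxL, hxB⟩ := not_subset.mp hnot
    have hLfin := D.mem_finite' hL.1
    have hxSD : x ∈ L ∆ B := Set.mem_symmDiff.mpr (Or.inl ⟨hxL, hxB⟩)
    obtain ⟨y, hySD, hL'⟩ := D.exchange hL.1 hB.1 x hxSD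
    rw [Set.mem_symmDiff] at hySD
    by_cases hyL : y ∈ L
    · have hEq : L ∆ ({x, y} : Set α) = L \ {x, y} := by
        ext a
        simp only [Set.mem_symmDiff, Set.mem_diff, Set.mem_insert_iff, Set.mem_singleton_iff]
        constructor
        · rintro (⟨ha, h2⟩ | ⟨h2, ha⟩)
          · exact ⟨ha, h2⟩
          · rcases h2 with rfl | rfl
            · exact absurd hxL ha
            · exact absurd hyL ha
        · rintro ⟨ha, h2⟩; exact Or.inl ⟨ha, h2⟩
      rw [hEq] at hL'
      have hss : L \ {x, y} ⊂ L :=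
        ⟨Set.diff_subset, fun h => (h hxL).2 (Or.inl rfl)⟩
      exact absurd (hL.2 _ hL') (not_le.mpr (Set.ncard_lt_ncard hss hLfin))
    · have hyB : y ∈ B := by
        rcases hySD with ⟨h, _⟩ | ⟨h, _⟩
        · exact absurd h hyL
        · exact h
      have hEq : L ∆ ({x, y} : Set α) = insert y (L \ {x}) := by
        ext a
        simp only [Set.mem_symmDiff, Set.mem_insert_iff, Set.mem_diff, Set.mem_singleton_iff]
        constructor
        · rintro (⟨ha, h2⟩ | ⟨h2, ha⟩)
          · exact Or.inr ⟨ha, fun h => h2 (Or.inl h)⟩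
          · rcases h2 with rfl | rfl
            · exact absurd hxL ha
            · exact Or.inl rfl
        · rintro (rfl | ⟨ha, h2⟩)
          · exact Or.inr ⟨Or.inr rfl, hyL⟩
          · refine Or.inl ⟨ha, ?_⟩
            rintro (rfl | rfl)
            · exact h2 rfl
            · exact hyL ha
      rw [hEq] at hL'
      have hcard : (insert y (L \ {x})).ncard = L.ncard := by
        rw [Set.ncard_insert_of_notMem (fun h => hyL h.1) hLfin.diff,
          Set.ncard_diff_singleton_add_one hxL hLfin]
      have hL'lb : D.LowerBase (insert y (L \ {x})) :=
        ⟨hL', fun F hF => hcard ▸ hL.2 F hF⟩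
      have hdiff : insert y (L \ {x}) \ B = (L \ B) \ {x} := by
        ext a
        simp only [Set.mem_diff, Set.mem_insert_iff, Set.mem_singleton_iff]
        constructor
        · rintro ⟨rfl | ⟨ha, hax⟩, haB⟩
          · exact absurd hyB haB
          · exact ⟨⟨ha, haB⟩, hax⟩
        · rintro ⟨⟨ha, haB⟩, hax⟩; exact ⟨Or.inr ⟨ha, hax⟩, haB⟩
      have hlt : ((L \ B) \ {x}).ncard < (L \ B).ncard :=
        Set.ncard_lt_ncard ⟨Set.diff_subset, fun h => (h ⟨hxL, hxB⟩).2 rfl⟩ hLfin.diff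
      have := hmin _ hL'lb
      rw [hdiff] at this
      omega
  · intro B hB
    obtain ⟨U0, hU0, hU0max⟩ := Set.exists_max_image D.Feasible Set.ncard
      D.feasible_finite' D.feasible_nonempty
    obtain ⟨U, hU, hmin⟩ := Set.exists_min_image {U | D.UpperBase U} (fun U => (B \ U).ncard)
      (D.feasible_finite'.subset (fun U hU => hU.1)) ⟨U0, hU0, hU0max⟩
    refine ⟨U, hU, ?_⟩
    by_contra hnot
    obtain ⟨x, hxB, hxU⟩ := not_subset.mp hnot
    have hUfin := D.mem_finite' hU.1
    have hBfin := D.mem_finite' hB.1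
    have hxSD : x ∈ U ∆ B := Set.mem_symmDiff.mpr (Or.inr ⟨hxB, hxU⟩)
    obtain ⟨y, hySD, hU'⟩ := D.exchange hU.1 hB.1 x hxSD
    rw [Set.mem_symmDiff] at hySD
    by_cases hyU : y ∈ U
    · have hyB : y ∉ B := by
        rcases hySD with ⟨_, h⟩ | ⟨_, h⟩
        · exact h
        · exact absurd hyU h
      have hEq : U ∆ ({x, y} : Set α) = insert x (U \ {y}) := by
        ext a
        simp only [Set.mem_symmDiff, Set.mem_insert_iff, Set.mem_diff, Set.mem_singleton_iff]
        constructor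
        · rintro (⟨ha, h2⟩ | ⟨h2, ha⟩)
          · exact Or.inr ⟨ha, fun h => h2 (Or.inr h)⟩
          · rcases h2 with rfl | rfl
            · exact Or.inl rfl
            · exact absurd hyU ha
        · rintro (rfl | ⟨ha, h2⟩)
          · exact Or.inr ⟨Or.inl rfl, hxU⟩
          · refine Or.inl ⟨ha, ?_⟩
            rintro (rfl | rfl)
            · exact hxU ha
            · exact h2 rfl
      rw [hEq] at hU'
      have hcard : (insert x (U \ {y})).ncard = U.ncard := by
        rw [Set.ncard_insert_of_notMem (fun h => hxU h.1) hUfin.diff,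
          Set.ncard_diff_singleton_add_one hyU hUfin]
      have hU'ub : D.UpperBase (insert x (U \ {y})) :=
        ⟨hU', fun F hF => hcard ▸ hU.2 F hF⟩
      have hdiff : B \ insert x (U \ {y}) = (B \ U) \ {x} := by
        ext a
        simp only [Set.mem_diff, Set.mem_insert_iff, Set.mem_singleton_iff]
        constructor
        · rintro ⟨ha, h2⟩
          refine ⟨⟨ha, fun haU => ?_⟩, fun hax => h2 (Or.inl hax)⟩
          refine h2 (Or.inr ⟨haU, fun hay => hyB (hay ▸ ha)⟩)
        · rintro ⟨⟨ha, haU⟩, hax⟩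
          exact ⟨ha, by rintro (rfl | ⟨h, _⟩) <;> [exact hax rfl; exact haU h]⟩
      have hlt : ((B \ U) \ {x}).ncard < (B \ U).ncard :=
        Set.ncard_lt_ncard ⟨Set.diff_subset, fun h => (h ⟨hxB, hxU⟩).2 rfl⟩ hBfin.diff
      have := hmin _ hU'ub
      rw [hdiff] at this
      omega
    · have hEq : U ∆ ({x, y} : Set α) = U ∪ {x, y} := by
        ext a
        simp only [Set.mem_symmDiff, Set.mem_union, Set.mem_insert_iff, Set.mem_singleton_iff]
        constructor
        · rintro (⟨ha, _⟩ | ⟨h2, _⟩)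
          · exact Or.inl ha
          · exact Or.inr h2
        · rintro (ha | h2)
          · refine Or.inl ⟨ha, ?_⟩
            rintro (rfl | rfl)
            · exact hxU ha
            · exact hyU ha
          · exact Or.inr ⟨h2, by rcases h2 with rfl | rfl <;> assumption⟩
      rw [hEq] at hU'
      have hss : U ⊂ U ∪ {x, y} :=
        ⟨Set.subset_union_left, fun h => hxU (h (Or.inr (Or.inl rfl)))⟩
      exact absurd (hU.2 _ hU') (not_le.mpr (Set.ncard_lt_ncard hss (D.mem_finite' hU')))
end

section
/- For matroids M_u, M_l on ground set E with every circuit of M_u a union of circuits of M_l: if F is independent in M_u and spanning in M_l, and x ∈ E \ F is such that F + x is dependent in M_u, then for any set F' independent in M_u and spanning in M_l with x ∈ F', there exists y ∈ F \ F' such that F + x − y is independent in M_u and spanning in M_l. -/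
open Set
open scoped symmDiff

private lemma exists_circuit_subset {α : Type*} (M : Matroid α) {X : Set α}
    (hX : X ⊆ M.E) (hfin : X.Finite) (hdep : ¬ M.Indep X) :
    ∃ C ⊆ X, M.IsCircuitDef C := by
  have hS : {D : Set α | D ⊆ X ∧ ¬ M.Indep D}.Finite :=
    hfin.finite_subsets.subset (fun D hD => hD.1)
  obtain ⟨C, ⟨hCX, hCdep⟩, hmin⟩ :=
    Set.Finite.exists_minimalFor Set.ncard _ hS ⟨X, subset_rfl, hdep⟩
  refine ⟨C, hCX, hCX.trans hX, hCdep, fun D hD => ?_⟩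
  by_contra hDdep
  have hfinC : C.Finite := hfin.subset hCX
  have hlt : D.ncard < C.ncard := Set.ncard_lt_ncard hD hfinC
  have := @hmin D ⟨hD.subset.trans hCX, hDdep⟩ hlt.le
  omega

private lemma circuit_mem_closure {α : Type*} {M : Matroid α} {C : Set α} {y : α}
    (hC : M.IsCircuitDef C) (hy : y ∈ C) : y ∈ M.closure (C \ {y}) := by
  by_contra hcl
  have hind : M.Indep (C \ {y}) := hC.2.2 _ (Set.sdiff_singleton_ssubset.2 hy)
  have : M.Indep (insert y (C \ {y})) := by
    rw [hind.insert_indep_iff_of_notMem (by simp)]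
    exact ⟨hC.1 hy, hcl⟩
  rw [Set.insert_diff_singleton, Set.insert_eq_of_mem hy] at this
  exact hC.2.1 this

/-- the key exchange step when adding an element creates dependence in `Mu`. -/
theorem exchange_step {α : Type*} (Mu Ml : Matroid α)
    (hE : Mu.E = Ml.E) (hfin : Mu.E.Finite) (h : CircuitsUnion Mu Ml)
    (F F' : Set α) (x : α)
    (hFind : ∃ B, Mu.IsBase B ∧ F ⊆ B) (hFsp : ∃ B, Ml.IsBase B ∧ B ⊆ F)
    (hx : x ∈ Mu.E \ F) (hdep : ¬ Mu.Indep (insert x F))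
    (hF'ind : ∃ B, Mu.IsBase B ∧ F' ⊆ B) (hF'sp : ∃ B, Ml.IsBase B ∧ B ⊆ F')
    (hxF' : x ∈ F') :
    ∃ y ∈ F \ F', (∃ B, Mu.IsBase B ∧ insert x F \ {y} ⊆ B) ∧
      (∃ B, Ml.IsBase B ∧ B ⊆ insert x F \ {y}) := by 
  obtain ⟨Bf, hBf, hFBf⟩ := hFind
  have hFind' : Mu.Indep F := Matroid.indep_iff.2 ⟨_, hBf, hFBf⟩
  obtain ⟨Bf', hBf', hFBf'⟩ := hF'ind
  have hF'ind' : Mu.Indep F' := Matroid.indep_iff.2 ⟨_, hBf', hFBf'⟩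
  have hFE : F ⊆ Mu.E := hFind'.subset_ground
  have hxE : x ∈ Mu.E := hx.1
  have hxF : x ∉ F := hx.2
  have hins : insert x F ⊆ Mu.E := Set.insert_subset hxE hFE
  obtain ⟨C, hCsub, hC⟩ := exists_circuit_subset Mu hins (hfin.subset hins) hdep
  have hxC : x ∈ C := by
    by_contra hxC
    exact hC.2.1 (hFind'.subset fun z hz => (hCsub hz).resolve_left (fun h => hxC (h ▸ hz)))
  obtain ⟨y, hyC, hyF'⟩ : ∃ y ∈ C, y ∉ F' := by
    by_contra hcon
    push_neg at hcon
    exact hC.2.1 (hF'ind'.subset hcon)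
  have hyx : y ≠ x := fun h => hyF' (h ▸ hxF')
  have hyF : y ∈ F := ((hCsub hyC).resolve_left hyx)
  refine ⟨y, ⟨hyF, hyF'⟩, ?_, ?_⟩
  · -- independence in Mu
    have hFy : Mu.Indep (F \ {y}) := hFind'.subset Set.diff_subset
    have hkey : Mu.Indep (insert x (F \ {y})) := by
      by_contra hbad
      have hxcl : x ∈ Mu.closure (F \ {y}) := by
        rw [hFy.insert_indep_iff_of_notMem (fun h => hxF h.1)] at hbad
        simpa [hxE] using hbad
      have hycl : y ∈ Mu.closure (C \ {y}) := circuit_mem_closure hC hyC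
      have hsub : C \ {y} ⊆ insert x (F \ {y}) := by
        intro z hz
        rcases hCsub hz.1 with h | h
        · exact Or.inl h
        · exact Or.inr ⟨h, hz.2⟩
      have : y ∈ Mu.closure (insert x (F \ {y})) :=
        Mu.closure_subset_closure hsub hycl
      rw [Matroid.closure_insert_eq_of_mem_closure hxcl] at this
      have hF : Mu.Indep (insert y (F \ {y})) := by
        rwa [Set.insert_diff_singleton, Set.insert_eq_of_mem hyF]
      rw [hFy.insert_indep_iff_of_notMem (by simp)] at hF
      exact hF.2 this
    rw [Set.insert_diff_singleton_comm (Ne.symm hyx)] at hkey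
    exact hkey.exists_isBase_superset
  · -- spanning in Ml
    obtain ⟨Bl, hBl, hBlF⟩ := hFsp
    have hFEl : F ⊆ Ml.E := hE ▸ hFE
    have hFsp' : Ml.Spanning F := (Matroid.spanning_iff_exists_isBase_subset hFEl).2 ⟨_, hBl, hBlF⟩
    have hinsE : insert x F ⊆ Ml.E := hE ▸ hins
    have hspx : Ml.Spanning (insert x F) :=
      hFsp'.superset (Set.subset_insert _ _) hinsE
    obtain ⟨𝒞, h𝒞, hCU⟩ := h C hC
    obtain ⟨C', hC'mem, hyC'⟩ : ∃ C' ∈ 𝒞, y ∈ C' := by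
      rw [hCU] at hyC; exact hyC
    have hC' : Ml.IsCircuitDef C' := h𝒞 C' hC'mem
    have hC'C : C' ⊆ C := fun z hz => hCU ▸ ⟨C', hC'mem, hz⟩
    have hycl : y ∈ Ml.closure (insert x F \ {y}) := by
      refine Ml.closure_subset_closure ?_ (circuit_mem_closure hC' hyC')
      exact fun z hz => ⟨hCsub (hC'C hz.1), hz.2⟩
    have hcleq : Ml.closure (insert x F \ {y}) = Ml.closure (insert x F) := by
      rw [← Matroid.closure_insert_eq_of_mem_closure hycl,
        Set.insert_diff_singleton, Set.insert_eq_of_mem (Set.mem_insert_of_mem _ hyF)]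
    have hsp : Ml.Spanning (insert x F \ {y}) := by
      rw [Matroid.spanning_iff_closure_eq (Set.diff_subset.trans hinsE), hcleq,
        ← Matroid.spanning_iff_closure_eq hinsE]
      exact hspx
    exact hsp.exists_isBase_subset
end
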